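/- Let A be a self-adjoint endomorphism of a (2n-2)-dimensional real inner product space D, and φ an orthogonal endomorphism of D with φ² = -id. If AφX + φAX = -hφX for all X ∈ D, where h = trace of A on D (the structure vector contributes 0), then h = 0, i.e. Aφ + φA = 0 on D. -/
import Mathlib


open scoped RealInnerProductSpace

theorem stmt_8 {D : Type*} [NormedAddCommGroup D] [InnerProductSpace ℝ D]
    [FiniteDimensional ℝ D] (n : ℕ) (hn : 2 ≤ n)
    (hdim : Module.finrank ℝ D = 2 * n - 2)
    (A φ : D →ₗ[ℝ] D) (h : ℝ)
    (hAsym : ∀ x y : D, ⟪A x, y⟫ = ⟪x, A y⟫)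
    (hφorth : ∀ x y : D, ⟪φ x, φ y⟫ = ⟪x, y⟫)
    (hφ2 : ∀ x : D, φ (φ x) = -x)
    (hh : h = LinearMap.trace ℝ D A)
    (hrel : ∀ X : D, A (φ X) + φ (A X) = -h • φ X) :
    h = 0 ∧ ∀ X : D, A (φ X) + φ (A X) = 0 := by
  have hcomp : φ ∘ₗ (A ∘ₗ φ) = A + h • LinearMap.id := by
    ext X
    have H := hrel (φ X)
    rw [hφ2 X, map_neg, neg_smul, smul_neg, neg_neg] at H
    simp only [LinearMap.comp_apply, LinearMap.add_apply, LinearMap.smul_apply,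
      LinearMap.id_apply]
    have := congrArg (fun v => A X + v) H
    simpa [add_comm, add_left_comm, add_assoc] using this
  have hAφφ : (A ∘ₗ φ) ∘ₗ φ = -A := by
    ext X
    simp [LinearMap.comp_apply, hφ2, map_neg]
  have htr : LinearMap.trace ℝ D (φ ∘ₗ (A ∘ₗ φ)) = LinearMap.trace ℝ D ((A ∘ₗ φ) ∘ₗ φ) :=
    LinearMap.trace_mul_comm ℝ φ (A ∘ₗ φ)
  rw [hcomp, hAφφ] at htr
  have hfin : (Module.finrank ℝ D : ℝ) = (2 * n - 2 : ℕ) := by rw [hdim]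
  have htr2 : h + h * ((2 * n - 2 : ℕ) : ℝ) = -h := by
    have := htr
    rw [map_add, map_neg, map_smul, LinearMap.trace_id, ← hh] at this
    rw [← hfin]
    simpa [smul_eq_mul] using this
  have hcast : (2 : ℝ) ≤ ((2 * n - 2 : ℕ) : ℝ) := by
    have : 2 ≤ 2 * n - 2 := by omega
    exact_mod_cast this
  have hz : h = 0 := by nlinarith
  refine ⟨hz, fun X => ?_⟩
  have := hrel X
  rw [hz] at this
  simpa using this
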